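/- arXiv:2208.05268 — 3 statements merged into one kernel-verified Lean document; each statement's English description precedes it below -/
import Mathlib

section
/- Let B be a real Banach space and let f : B → ℝ ∪ {+∞} be proper, convex, and lower semicontinuous. Then f coincides with its biconjugate computed through the dual pairing: for every x ∈ B, f(x) = sup_{y ∈ B*} (⟨y, x⟩ − f*(y)), where f*(y) = sup_{x' ∈ B} (⟨y, x'⟩ − f(x')). -/
/-!
The epigraph of `f` in `E × ℝ` is closed and convex, so Hahn–Banach strictly separates a point
`(x, r)` with `r < f x` from it: `g x + c r < u < g z + c t` on the epigraph, for a continuous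
functional `g`, and `c ≥ 0` because the epigraph is unbounded upwards. If `c > 0` the separating
hyperplane is the graph of an affine minorant of `f` exceeding `r` at `x`. If `c = 0` it
separates `x` from the domain of `f`, and adding a large multiple of `u - g` to any affine
minorant (one exists by the first case, applied at a point where `f` is finite) produces such a
minorant again. An affine minorant `y - β` has `f* y ≤ β`, hence lies below `f**`, while
`f** ≤ f` is the Fenchel–Young inequality.
-/

/-- Convexity for `EReal`-valued functions on a real vector space. -/
def ConvexE {B : Type*} [AddCommGroup B] [Module ℝ B] (f : B → EReal) : Prop :=
  ∀ x y : B, ∀ a b : ℝ, 0 ≤ a → 0 ≤ b → a + b = 1 →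
    f (a • x + b • y) ≤ (a : EReal) * f x + (b : EReal) * f y

noncomputable section

variable {E : Type*}

def realEpigraph (f : E → EReal) : Set (E × ℝ) := {p | f p.1 ≤ p.2}

theorem ConvexE.convex_realEpigraph [AddCommGroup E] [Module ℝ E] {f : E → EReal}
    (hf : ConvexE f) : Convex ℝ (realEpigraph f) := by
  rintro ⟨x, s⟩ hx ⟨y, t⟩ hy a b ha hb hab
  calc f (a • x + b • y) ≤ a * f x + b * f y := hf x y a b ha hb hab
    _ ≤ a * s + b * t := add_le_add (mul_le_mul_of_nonneg_left hx (by exact_mod_cast ha))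
        (mul_le_mul_of_nonneg_left hy (by exact_mod_cast hb))
    _ = ((a • (x, s) + b • (y, t)).2 : ℝ) := by simp

theorem LowerSemicontinuous.isClosed_realEpigraph [TopologicalSpace E] {f : E → EReal}
    (hf : LowerSemicontinuous f) : IsClosed (realEpigraph f) :=
  hf.isClosed_epigraph.preimage (continuous_id.prodMap continuous_coe_real_ereal)

variable [TopologicalSpace E] [AddCommGroup E] [Module ℝ E]

def fenchelConjugate (f : E → EReal) (y : E →L[ℝ] ℝ) : EReal :=
  ⨆ x, (y x : EReal) - f x

def fenchelBiconjugate (f : E → EReal) (x : E) : EReal :=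
  ⨆ y : E →L[ℝ] ℝ, (y x : EReal) - fenchelConjugate f y

def IsAffineMinorant (f : E → EReal) (y : E →L[ℝ] ℝ) (β : ℝ) : Prop :=
  ∀ x, ((y x - β : ℝ) : EReal) ≤ f x

theorem fenchelBiconjugate_le (f : E → EReal) (x : E) : fenchelBiconjugate f x ≤ f x := by
  refine iSup_le fun y => ?_
  calc (y x : EReal) - fenchelConjugate f y
      ≤ y x - (y x - f x) := EReal.sub_le_sub le_rfl (le_iSup (fun x' => (y x' : EReal) - f x') x)
    _ = f x := by rw [sub_eq_add_neg (y x : EReal) (f x), EReal.sub_add_cancel_left, neg_neg]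

namespace IsAffineMinorant

variable {f : E → EReal} {y : E →L[ℝ] ℝ} {β : ℝ}

theorem fenchelConjugate_le (h : IsAffineMinorant f y β) : fenchelConjugate f y ≤ β :=
  iSup_le fun x => EReal.sub_le_of_le_add' <|
    (EReal.sub_le_iff_le_add (.inl (EReal.coe_ne_bot β)) (.inl (EReal.coe_ne_top β))).1 (h x)

theorem le_fenchelBiconjugate (h : IsAffineMinorant f y β) (x : E) :
    ((y x - β : ℝ) : EReal) ≤ fenchelBiconjugate f x :=
  le_iSup_of_le y <| by rw [EReal.coe_sub]; exact EReal.sub_le_sub le_rfl h.fenchelConjugate_le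

end IsAffineMinorant

variable {f : E → EReal}

theorem exists_isAffineMinorant_of_separating {g : E →L[ℝ] ℝ} {c u : ℝ} (hc : 0 < c)
    (hsep : ∀ x' (t : ℝ), f x' ≤ t → u < g x' + t * c) :
    ∃ y β, IsAffineMinorant f y β ∧ ∀ z, y z - β = (u - g z) / c := by
  have hval : ∀ z, (-c⁻¹ • g) z - -(u / c) = (u - g z) / c := fun z => by
    simp only [smul_apply, smul_eq_mul]
    field_simp
    ring
  refine ⟨-c⁻¹ • g, -(u / c), fun z => ?_, hval⟩
  rw [hval, ← EReal.le_of_forall_lt_iff_le]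
  intro t ht
  have := hsep z t ht.le
  exact_mod_cast (div_le_iff₀ hc).2 (by linarith)

theorem IsAffineMinorant.exists_lt_apply_of_vertical_separation {y₀ : E →L[ℝ] ℝ} {β₀ : ℝ}
    (h₀ : IsAffineMinorant f y₀ β₀) {g : E →L[ℝ] ℝ} {u : ℝ} {x : E} (hx : g x < u)
    (hsep : ∀ x' (t : ℝ), f x' ≤ t → u < g x') (r : ℝ) :
    ∃ y β, IsAffineMinorant f y β ∧ r < y x - β := by
  set lam := max 0 ((r + 1 - (y₀ x - β₀)) / (u - g x))
  have hval : ∀ z, (y₀ - lam • g) z - (β₀ - lam * u) = (y₀ z - β₀) + lam * (u - g z) :=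
    fun z => by simp only [sub_apply, smul_apply, smul_eq_mul]; ring
  refine ⟨y₀ - lam • g, β₀ - lam * u, fun z => ?_, ?_⟩
  · rw [hval, ← EReal.le_of_forall_lt_iff_le]
    intro t ht
    have hgz := hsep z t ht.le
    have hy₀ : y₀ z - β₀ ≤ t := by exact_mod_cast (h₀ z).trans ht.le
    have htilt : lam * (u - g z) ≤ 0 :=
      mul_nonpos_of_nonneg_of_nonpos (le_max_left _ _) (by linarith)
    exact_mod_cast (by linarith : y₀ z - β₀ + lam * (u - g z) ≤ t)
  · have := (div_le_iff₀ (sub_pos.2 hx)).1 (le_max_right 0 ((r + 1 - (y₀ x - β₀)) / (u - g x)))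
    rw [hval]
    linarith

variable [IsTopologicalAddGroup E] [ContinuousSMul ℝ E] [LocallyConvexSpace ℝ E]

theorem exists_separating_of_lt (hproper : ∃ x, f x ≠ ⊤) (hconv : ConvexE f)
    (hlsc : LowerSemicontinuous f) {x : E} {r : ℝ} (hr : r < f x) :
    ∃ (g : E →L[ℝ] ℝ) (c u : ℝ), 0 ≤ c ∧ g x + r * c < u ∧
      ∀ x' (t : ℝ), f x' ≤ t → u < g x' + t * c := by
  obtain ⟨φ, u, hφx, hφepi⟩ := geometric_hahn_banach_point_closed hconv.convex_realEpigraph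
    hlsc.isClosed_realEpigraph (show (x, r) ∉ realEpigraph f from hr.not_ge)
  set g := φ.comp (ContinuousLinearMap.inl ℝ E ℝ)
  set c := φ (0, 1)
  have hφ : ∀ z t, φ (z, t) = g z + t * c := fun z t => by
    rw [show ((z, t) : E × ℝ) = (z, 0) + t • (0, 1) by simp, map_add, map_smul, smul_eq_mul]
    rfl
  have hsep : ∀ x' (t : ℝ), f x' ≤ t → u < g x' + t * c := fun x' t ht => hφ x' t ▸ hφepi _ ht
  refine ⟨g, c, u, ?_, hφ x r ▸ hφx, hsep⟩
  -- the epigraph contains a vertical half-line, on which `φ` stays above `u`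
  obtain ⟨x₀, hx₀⟩ := hproper
  by_contra! hc
  set t := max (f x₀).toReal ((u - g x₀) / c)
  have hlt := hsep x₀ t ((EReal.le_coe_toReal hx₀).trans (by exact_mod_cast le_max_left _ _))
  have hle := (div_le_iff_of_neg hc).1 (le_max_right (f x₀).toReal ((u - g x₀) / c))
  linarith

theorem exists_isAffineMinorant (hbot : ∀ x, f x ≠ ⊥) (hproper : ∃ x, f x ≠ ⊤)
    (hconv : ConvexE f) (hlsc : LowerSemicontinuous f) : ∃ y β, IsAffineMinorant f y β := by
  obtain ⟨x₀, hx₀⟩ := hproper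
  obtain ⟨r₀, hr₀⟩ : ∃ r₀ : ℝ, f x₀ = r₀ := ⟨_, (EReal.coe_toReal hx₀ (hbot x₀)).symm⟩
  obtain ⟨g, c, u, -, hx, hsep⟩ := exists_separating_of_lt ⟨x₀, hx₀⟩ hconv hlsc
    (show ((r₀ - 1 : ℝ) : EReal) < f x₀ by rw [hr₀]; exact_mod_cast sub_one_lt r₀)
  have hc : 0 < c := by linarith [hsep x₀ r₀ hr₀.le]
  obtain ⟨y, β, hyβ, -⟩ := exists_isAffineMinorant_of_separating hc hsep
  exact ⟨y, β, hyβ⟩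

theorem exists_isAffineMinorant_gt (hbot : ∀ x, f x ≠ ⊥) (hproper : ∃ x, f x ≠ ⊤)
    (hconv : ConvexE f) (hlsc : LowerSemicontinuous f) {x : E} {r : ℝ} (hr : r < f x) :
    ∃ y β, IsAffineMinorant f y β ∧ r < y x - β := by
  obtain ⟨g, c, u, hc, hx, hsep⟩ := exists_separating_of_lt hproper hconv hlsc hr
  rcases hc.lt_or_eq with hc | rfl
  · obtain ⟨y, β, hyβ, hval⟩ := exists_isAffineMinorant_of_separating hc hsep
    exact ⟨y, β, hyβ, by rw [hval, lt_div_iff₀ hc]; linarith⟩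
  · simp only [mul_zero, add_zero] at hx hsep
    obtain ⟨y₀, β₀, h₀⟩ := exists_isAffineMinorant hbot hproper hconv hlsc
    exact h₀.exists_lt_apply_of_vertical_separation hx hsep r

theorem fenchelBiconjugate_eq (hbot : ∀ x, f x ≠ ⊥) (hproper : ∃ x, f x ≠ ⊤)
    (hconv : ConvexE f) (hlsc : LowerSemicontinuous f) (x : E) :
    fenchelBiconjugate f x = f x := by
  refine le_antisymm (fenchelBiconjugate_le f x) (EReal.ge_of_forall_gt_iff_ge.1 fun r hr => ?_)
  obtain ⟨y, β, hyβ, hr⟩ := exists_isAffineMinorant_gt hbot hproper hconv hlsc hr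
  exact (EReal.coe_le_coe_iff.2 hr.le).trans (hyβ.le_fenchelBiconjugate x)

end

theorem stmt1_general {B : Type*} [NormedAddCommGroup B] [NormedSpace ℝ B]
    (f : B → EReal) (hbot : ∀ x, f x ≠ ⊥) (hproper : ∃ x, f x ≠ ⊤)
    (hconv : ConvexE f) (hlsc : LowerSemicontinuous f) :
    ∀ x : B, f x = ⨆ y : B →L[ℝ] ℝ,
      ((y x : EReal) - ⨆ x' : B, ((y x' : EReal) - f x')) := fun x =>
  (fenchelBiconjugate_eq hbot hproper hconv hlsc x).symm

/-- Fenchel–Moreau: a proper convex lower semicontinuous function on a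
real Banach space equals its biconjugate computed through the dual pairing. -/
theorem stmt1 {B : Type*} [NormedAddCommGroup B] [NormedSpace ℝ B] [CompleteSpace B]
    (f : B → EReal) (hbot : ∀ x, f x ≠ ⊥) (hproper : ∃ x, f x ≠ ⊤)
    (hconv : ConvexE f) (hlsc : LowerSemicontinuous f) :
    ∀ x : B, f x = ⨆ y : B →L[ℝ] ℝ,
      ((y x : EReal) - ⨆ x' : B, ((y x' : EReal) - f x')) :=
  stmt1_general f hbot hproper hconv hlsc
end

section
/- Let B be a real Banach space, let C ⊆ B be an open convex set, and let f : C → ℝ be convex. If f is bounded above on some ball of positive radius contained in C around some point x₀ ∈ C, then for every point y ∈ C there is a ball of positive radius around y contained in C on which f is Lipschitz continuous. -/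
open scoped NNReal

/-- a real-valued convex function on an open convex set `C` that is bounded
above on some ball contained in `C` is locally Lipschitz at every point of `C`. -/
theorem stmt7 {B : Type*} [NormedAddCommGroup B] [NormedSpace ℝ B]
    {C : Set B} (hCopen : IsOpen C) (hCconv : Convex ℝ C)
    (f : B → ℝ) (hf : ConvexOn ℝ C f)
    (x₀ : B) (hx₀ : x₀ ∈ C) (r : ℝ) (hr : 0 < r) (hball : Metric.ball x₀ r ⊆ C)
    (M : ℝ) (hM : ∀ z ∈ Metric.ball x₀ r, f z ≤ M) :
    ∀ y ∈ C, ∃ r' > 0, Metric.ball y r' ⊆ C ∧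
      ∃ L : ℝ≥0, LipschitzOnWith L f (Metric.ball y r') := by
  have hbdd : ∃ x ∈ C, (nhds x).IsBoundedUnder (· ≤ ·) f :=
    ⟨x₀, hx₀, M, Filter.eventually_map.2 <|
      Filter.eventually_of_mem (Metric.ball_mem_nhds x₀ hr) hM⟩
  have hlip : LocallyLipschitzOn C f :=
    ((hf.continuousOn_tfae hCopen ⟨x₀, hx₀⟩).out 3 0).mp hbdd
  intro y hy
  obtain ⟨K, t, ht, hK⟩ := hlip hy
  rw [hCopen.nhdsWithin_eq hy] at ht
  obtain ⟨ε, hε, hεt⟩ := Metric.mem_nhds_iff.1 (Filter.inter_mem ht (hCopen.mem_nhds hy))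
  exact ⟨ε, hε, fun z hz => (hεt hz).2, K, hK.mono fun z hz => (hεt hz).1⟩
end

section
/- Let H be a real Hilbert space and let f : H → ℝ ∪ {+∞} be proper, convex, and lower semicontinuous. Then for every x ∈ H (including points where f(x) = +∞), the Moreau envelope converges monotonically from below to f as the parameter tends to zero: ε ↦ ᵋf(x) is nonincreasing in ε, and sup_{ε > 0} ᵋf(x) = lim_{ε → 0⁺} ᵋf(x) = f(x), where the limit is taken in ℝ ∪ {+∞}. -/
/-- The Moreau envelope `ᵋf(x) = inf_z ( f z + (1/(2ε))‖x − z‖² )`. -/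
noncomputable def moreauEnv {H : Type*} [NormedAddCommGroup H] [InnerProductSpace ℝ H]
    (f : H → EReal) (ε : ℝ) (x : H) : EReal :=
  ⨅ z : H, f z + ((1 / (2 * ε) * ‖x - z‖ ^ 2 : ℝ) : EReal)

/-!
The envelope is an infimum of `f` plus penalties that grow as `ε ↓ 0`, so it is antitone in `ε`
and bounded by `f x` (take `z = x`). For the lower bound, separating a point below the closed
convex epigraph of `f` gives a continuous affine minorant `L + C`. Given `c < f x`,
lower semicontinuity keeps `f > c` on a ball of radius `δ` around `x`, while off that ball the
penalty `‖x - z‖² / (2ε)` eventually beats the at most linear decay of `L z + C`.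
-/

open Filter Topology

theorem ConvexE.convex_epigraph {B : Type*} [AddCommGroup B] [Module ℝ B] {f : B → EReal}
    (hf : ConvexE f) : Convex ℝ {p : B × ℝ | f p.1 ≤ p.2} := by
  rintro ⟨x, s⟩ hx ⟨y, t⟩ hy a b ha hb hab
  calc f (a • x + b • y) ≤ (a : EReal) * f x + (b : EReal) * f y := hf x y a b ha hb hab
    _ ≤ (a : EReal) * s + (b : EReal) * t :=
      add_le_add (mul_le_mul_of_nonneg_left hx (mod_cast ha))
        (mul_le_mul_of_nonneg_left hy (mod_cast hb))
    _ = ((a • (x, s) + b • (y, t)).2 : ℝ) := by simp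

theorem LowerSemicontinuous.isClosed_real_epigraph {α : Type*} [TopologicalSpace α]
    {f : α → EReal} (hf : LowerSemicontinuous f) : IsClosed {p : α × ℝ | f p.1 ≤ p.2} :=
  hf.isClosed_epigraph.preimage <|
    continuous_fst.prodMk (continuous_coe_real_ereal.comp continuous_snd)

theorem ConvexE.exists_affine_minorant {E : Type*} [AddCommGroup E] [Module ℝ E]
    [TopologicalSpace E] [IsTopologicalAddGroup E] [ContinuousSMul ℝ E] [LocallyConvexSpace ℝ E]
    {f : E → EReal} (hconv : ConvexE f) (hlsc : LowerSemicontinuous f)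
    (hbot : ∀ z, f z ≠ ⊥) (hproper : ∃ z, f z ≠ ⊤) :
    ∃ (L : StrongDual ℝ E) (C : ℝ), ∀ z, ((L z + C : ℝ) : EReal) ≤ f z := by
  obtain ⟨z₀, hz₀⟩ := hproper
  lift f z₀ to ℝ using ⟨hz₀, hbot z₀⟩ with t₀ ht₀
  have hout : (z₀, t₀ - 1) ∉ {p : E × ℝ | f p.1 ≤ p.2} := by
    simp only [Set.mem_ofPred_eq, ← ht₀, EReal.coe_le_coe_iff, not_le]
    linarith
  obtain ⟨φ, s, hφout, hφepi⟩ :=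
    geometric_hahn_banach_point_closed hconv.convex_epigraph hlsc.isClosed_real_epigraph hout
  set a := φ (0, 1)
  have hφ : ∀ z t, φ (z, t) = φ (z, 0) + t * a := fun z t => by
    rw [← smul_eq_mul, ← map_smul, ← map_add, Prod.smul_mk, smul_zero, smul_eq_mul, mul_one,
      Prod.mk_add_mk, add_zero, zero_add]
  -- `φ` separates `(z₀, t₀ - 1)` from `(z₀, t₀)`, so it increases in the vertical direction
  have ha : 0 < a := by
    have := hφepi (z₀, t₀) (by simp [← ht₀])
    rw [hφ] at this hφout
    nlinarith
  refine ⟨-a⁻¹ • φ.comp (.inl ℝ E ℝ), s / a, fun z => ?_⟩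
  induction h : f z using EReal.rec with
  | bot => exact absurd h (hbot z)
  | top => exact le_top
  | coe t =>
    have := hφepi (z, t) (by simp [h])
    rw [hφ] at this
    rw [EReal.coe_le_coe_iff, smul_apply, smul_eq_mul,
      ContinuousLinearMap.comp_apply, ContinuousLinearMap.inl_apply, div_eq_inv_mul]
    rw [show -a⁻¹ * φ (z, 0) + a⁻¹ * s = (s - φ (z, 0)) / a by ring, div_le_iff₀ ha]
    linarith

theorem add_mul_le_sq_div {A K δ r ε : ℝ} (hδ : 0 ≤ δ) (hr : δ ≤ r) (hε : 0 < ε)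
    (hε₁ : ε ≤ 1) (hεδ : 4 * ε * (|A| + K ^ 2) ≤ δ ^ 2) : A + K * r ≤ r ^ 2 / (2 * ε) := by
  rw [le_div_iff₀ (by positivity)]
  have hδr : δ ^ 2 ≤ r ^ 2 := pow_le_pow_left₀ hδ hr 2
  -- AM-GM: `2 ε K r ≤ r² / 2 + 2 ε² K²`
  nlinarith [sq_nonneg (r - 2 * ε * K), le_abs_self A,
    mul_le_mul_of_nonneg_right hε₁ (sq_nonneg K)]

section MoreauEnvelope

variable {H : Type*} [NormedAddCommGroup H] [InnerProductSpace ℝ H] {f : H → EReal} {x : H}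

theorem moreauEnv_antitoneOn : AntitoneOn (fun ε => moreauEnv f ε x) (Set.Ioi 0) :=
  fun ε hε δ _ hεδ => iInf_mono fun z => add_le_add_right (EReal.coe_le_coe_iff.2 <|
    mul_le_mul_of_nonneg_right (one_div_le_one_div_of_le (by simpa using hε) (by linarith))
      (by positivity)) (f z)

theorem moreauEnv_le (ε : ℝ) : moreauEnv f ε x ≤ f x :=
  (iInf_le _ x).trans_eq (by simp)

theorem eventually_lt_moreauEnv (L : StrongDual ℝ H) (C : ℝ)
    (hmin : ∀ z, ((L z + C : ℝ) : EReal) ≤ f z) (hlsc : LowerSemicontinuousAt f x)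
    {b : EReal} (hb : b < f x) : ∀ᶠ ε in 𝓝[>] 0, b < moreauEnv f ε x := by
  obtain ⟨c, hbc, hc⟩ := EReal.exists_between_coe_real hb
  obtain ⟨δ, hδ, hnear⟩ := Metric.eventually_nhds_iff.1 (hlsc c hc)
  set A := c - L x - C
  have hε₀ : 0 < min 1 (δ ^ 2 / (4 * (|A| + ‖L‖ ^ 2 + 1))) := by positivity
  filter_upwards [Ioc_mem_nhdsGT hε₀] with ε ⟨hε, hεε₀⟩
  have hε₁ : ε ≤ 1 := hεε₀.trans (min_le_left _ _)
  have hεδ : 4 * ε * (|A| + ‖L‖ ^ 2) ≤ δ ^ 2 := by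
    have := hεε₀.trans (min_le_right _ _)
    rw [le_div_iff₀ (by positivity)] at this
    nlinarith
  refine hbc.trans_le (le_iInf fun z => ?_)
  rcases lt_or_ge (dist z x) δ with hzx | hzx
  · calc (c : EReal) ≤ f z := (hnear hzx).le
      _ ≤ f z + ((1 / (2 * ε) * ‖x - z‖ ^ 2 : ℝ) : EReal) :=
        le_add_of_nonneg_right (EReal.coe_nonneg.2 (by positivity))
  · rw [dist_comm, dist_eq_norm] at hzx
    have hLz : L x - ‖L‖ * ‖x - z‖ ≤ L z := by
      have := (le_abs_self _).trans (L.le_opNorm (x - z))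
      rw [map_sub] at this
      linarith
    have := add_mul_le_sq_div hδ.le hzx hε hε₁ hεδ
    calc (c : EReal)
        ≤ ((L z + C : ℝ) : EReal) + ((1 / (2 * ε) * ‖x - z‖ ^ 2 : ℝ) : EReal) := by
          rw [← EReal.coe_add, EReal.coe_le_coe_iff, one_div_mul_eq_div]
          linarith
      _ ≤ f z + ((1 / (2 * ε) * ‖x - z‖ ^ 2 : ℝ) : EReal) := add_le_add_left (hmin z) _

end MoreauEnvelope

theorem stmt15_general {H : Type*} [NormedAddCommGroup H] [InnerProductSpace ℝ H]
    (f : H → EReal) (hbot : ∀ z, f z ≠ ⊥) (hproper : ∃ z, f z ≠ ⊤)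
    (hconv : ConvexE f) (hlsc : LowerSemicontinuous f) (x : H) :
    (∀ ε δ : ℝ, 0 < ε → ε ≤ δ → moreauEnv f δ x ≤ moreauEnv f ε x) ∧
    (∀ ε : ℝ, 0 < ε → moreauEnv f ε x ≤ f x) ∧
    (⨆ ε : {e : ℝ // 0 < e}, moreauEnv f (ε : ℝ) x) = f x ∧
    Filter.Tendsto (fun ε : ℝ => moreauEnv f ε x)
      (nhdsWithin 0 (Set.Ioi 0)) (nhds (f x)) := by
  obtain ⟨L, C, hmin⟩ := hconv.exists_affine_minorant hlsc hbot hproper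
  have htendsto : Tendsto (fun ε : ℝ => moreauEnv f ε x) (𝓝[>] 0) (𝓝 (f x)) :=
    tendsto_order.2 ⟨fun b hb => eventually_lt_moreauEnv L C hmin (hlsc x) hb,
      fun b hb => Eventually.of_forall fun ε => (moreauEnv_le ε).trans_lt hb⟩
  refine ⟨fun ε δ hε hεδ => moreauEnv_antitoneOn hε (hε.trans_le hεδ) hεδ,
    fun ε _ => moreauEnv_le ε, le_antisymm (iSup_le fun ε => moreauEnv_le ε) ?_, htendsto⟩
  refine le_of_tendsto htendsto ?_
  filter_upwards [self_mem_nhdsWithin] with ε hε using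
    le_iSup (fun ε : {e : ℝ // 0 < e} => moreauEnv f ε x) ⟨ε, hε⟩

/-- for every `x` (including points where `f x = +∞`), the Moreau
envelope is nonincreasing in the parameter, and converges monotonically from below
to `f x` as the parameter tends to `0⁺`:
`sup_{ε>0} ᵋf(x) = lim_{ε→0⁺} ᵋf(x) = f(x)` in `ℝ ∪ {+∞}`. -/
theorem stmt15 {H : Type*} [NormedAddCommGroup H] [InnerProductSpace ℝ H]
    [CompleteSpace H]
    (f : H → EReal) (hbot : ∀ z, f z ≠ ⊥) (hproper : ∃ z, f z ≠ ⊤)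
    (hconv : ConvexE f) (hlsc : LowerSemicontinuous f) (x : H) :
    (∀ ε δ : ℝ, 0 < ε → ε ≤ δ → moreauEnv f δ x ≤ moreauEnv f ε x) ∧
    (∀ ε : ℝ, 0 < ε → moreauEnv f ε x ≤ f x) ∧
    (⨆ ε : {e : ℝ // 0 < e}, moreauEnv f (ε : ℝ) x) = f x ∧
    Filter.Tendsto (fun ε : ℝ => moreauEnv f ε x)
      (nhdsWithin 0 (Set.Ioi 0)) (nhds (f x)) :=
  stmt15_general f hbot hproper hconv hlsc x
end
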